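/- Let r, n₁, q₁, q₂, q₂' be positive integers with n₁ | q₁r, such that every prime factor of q₁ divides n₁r, and gcd(q₂, n₁r) = gcd(q₂', n₁r) = 1; let m, m' ∈ ℤ. If 𝔎(0) ≠ 0 then q₂ = q₂'. Moreover, if q₂ = q₂', then |𝔎(0)| ≤ q₁q₂r · Σ_{d | q₁q₂} Σ_{d' | q₁q₂, gcd(d,d') | m − m'} gcd(d, d'), where the sums run over positive divisors of q₁q₂. -/

import Mathlib

open Finset
open scoped Classical

/-- `e(n/c) = exp(2πin/c)`, the additive character modulo `c` evaluated at the
integer `n`. -/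
noncomputable def eMod (c : ℕ) (n : ℤ) : ℂ :=
  Complex.exp (2 * Real.pi * Complex.I * n / c)

/-- The Kloosterman sum `S(u, v; c) = Σ_{x mod c, (x,c)=1} e((ux + v x̄)/c)`. -/
noncomputable def kloos (u v : ℤ) (c : ℕ) : ℂ :=
  ∑ x ∈ (Finset.range c).filter (fun x => Nat.Coprime x c),
    eMod c (u * x + v * (((x : ZMod c)⁻¹).val : ℤ))

/-- The character sum `𝔈_r(n₁, n₂, m, q) = Σ*_{a mod q} e(ma/q) S(ra, n₂; qr/n₁)`. -/
noncomputable def charSum (r n₁ : ℕ) (n₂ m : ℤ) (q : ℕ) : ℂ :=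
  ∑ a ∈ (Finset.range q).filter (fun a => Nat.Coprime a q),
    eMod q (m * a) * kloos (r * a) n₂ (q * r / n₁)

/-- The correlation sum `𝔎(ñ₂)` of the paper (equation (5.10)). -/
noncomputable def KKsum (r n₁ q₁ q₂ q₂' : ℕ) (m m' nt2 : ℤ) : ℂ :=
  ((n₁ : ℂ) / ((q₂ : ℂ) * q₂' * q₁ * r)) *
    ∑ β ∈ Finset.range (q₂ * q₂' * q₁ * r / n₁),
      charSum r n₁ (β : ℤ) m (q₁ * q₂) *
        (starRingEnd ℂ) (charSum r n₁ (β : ℤ) m' (q₁ * q₂')) *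
        eMod (q₂ * q₂' * q₁ * r / n₁) (nt2 * β)

lemma eMod_zero (c : ℕ) : eMod c 0 = 1 := by simp [eMod]

lemma eMod_add (c : ℕ) (a b : ℤ) : eMod c (a + b) = eMod c a * eMod c b := by
  rw [eMod, eMod, eMod, ← Complex.exp_add]
  congr 1
  push_cast
  ring

lemma eMod_scale (s c : ℕ) (hs : s ≠ 0) (hc : c ≠ 0) (n : ℤ) :
    eMod (s * c) (s * n) = eMod c n := by
  unfold eMod
  congr 1
  push_cast
  rw [div_eq_div_iff (by exact_mod_cast Nat.mul_ne_zero hs hc) (by exact_mod_cast hc)]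
  ring

lemma eMod_conj (c : ℕ) (n : ℤ) : (starRingEnd ℂ) (eMod c n) = eMod c (-n) := by
  unfold eMod
  rw [← Complex.exp_conj]
  congr 1
  simp only [map_div₀, map_mul, Complex.conj_I, map_natCast, map_intCast, map_ofNat]
  have : (starRingEnd ℂ) (Real.pi:ℂ) = (Real.pi:ℂ) := Complex.conj_ofReal _
  rw [this]
  push_cast
  ring

lemma eMod_int_mul_self (c : ℕ) (k : ℤ) : eMod c (k * c) = 1 := by
  rcases Nat.eq_zero_or_pos c with h | h
  · simp [eMod, h]
  · unfold eMod
    rw [show 2 * (Real.pi:ℂ) * Complex.I * ((k * c : ℤ):ℂ) / c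
        = k * (2 * Real.pi * Complex.I) by
      have : (c:ℂ) ≠ 0 := Nat.cast_ne_zero.mpr h.ne'
      field_simp
      push_cast
      ring]
    exact Complex.exp_int_mul_two_pi_mul_I k

lemma eMod_pow (c : ℕ) (n : ℤ) (b : ℕ) : eMod c n ^ b = eMod c (n * b) := by
  rw [eMod, eMod, ← Complex.exp_nat_mul]
  congr 1
  push_cast
  ring

lemma eMod_eq_one_iff (c : ℕ) (hc : c ≠ 0) (n : ℤ) : eMod c n = 1 ↔ (c:ℤ) ∣ n := by
  unfold eMod
  rw [Complex.exp_eq_one_iff]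
  constructor
  · rintro ⟨k, hk⟩
    refine ⟨k, ?_⟩
    have hc' : (c:ℂ) ≠ 0 := Nat.cast_ne_zero.mpr hc
    have h2 : (2 * (Real.pi:ℂ) * Complex.I) ≠ 0 := by
      simp [Real.pi_ne_zero, Complex.I_ne_zero]
    have h2 : (2 * (Real.pi:ℂ) * Complex.I) ≠ 0 := by
      simp [Real.pi_ne_zero, Complex.I_ne_zero]
    have : (n:ℂ) = c * k := by
      have hk' : 2 * (Real.pi:ℂ) * Complex.I * n = 2 * Real.pi * Complex.I * (c * k) := by
        field_simp at hk
        linear_combination (2 * (Real.pi:ℂ) * Complex.I) * hk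
      have := mul_left_cancel₀ h2 hk'
      exact this
    exact_mod_cast this
  · rintro ⟨k, hk⟩
    refine ⟨k, ?_⟩
    have hc' : (c:ℂ) ≠ 0 := Nat.cast_ne_zero.mpr hc
    rw [hk]
    push_cast
    field_simp

lemma eMod_orth (B : ℕ) (hB : B ≠ 0) (k : ℤ) :
    ∑ β ∈ Finset.range B, eMod B (k * β) = if (B:ℤ) ∣ k then (B:ℂ) else 0 := by
  have hz : ∀ β : ℕ, eMod B (k * β) = eMod B k ^ β := fun β => (eMod_pow B k β).symm
  simp only [hz]
  split_ifs with h
  · rcases h with ⟨t, ht⟩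
    have : eMod B k = 1 := by
      rw [ht, mul_comm (B:ℤ) t]
      exact eMod_int_mul_self B t
    simp [this]
  · have hne : eMod B k ≠ 1 := fun hh => h ((eMod_eq_one_iff B hB k).mp hh)
    rw [geom_sum_eq hne]
    have : eMod B k ^ B = 1 := by
      rw [eMod_pow]
      exact eMod_int_mul_self B k
    rw [this]
    simp

open ArithmeticFunction in
lemma moebius_indicator (n : ℕ) (hn : n ≠ 0) :
    ∑ d ∈ n.divisors, (moebius d : ℤ) = if n = 1 then 1 else 0 := by
  have h := congrArg (fun f : ArithmeticFunction ℤ => f n) moebius_mul_coe_zeta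
  simp only [mul_apply, one_apply] at h
  rw [← h, ← Nat.sum_divisorsAntidiagonal (fun d e => (moebius d : ℤ))]
  apply Finset.sum_congr rfl
  intro x hx
  rw [Nat.mem_divisorsAntidiagonal] at hx
  have hx2 : x.2 ≠ 0 := by rintro h0; exact hn (by rw [← hx.1, h0, mul_zero])
  simp [intCoe_apply, zeta_apply_ne hx2]

open ArithmeticFunction in
lemma coprime_indicator (q a : ℕ) (hq : q ≠ 0) :
    (if Nat.Coprime a q then (1:ℂ) else 0) =
      ∑ d ∈ q.divisors.filter (fun d => d ∣ a), ((moebius d : ℤ) : ℂ) := by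
  have hg : Nat.gcd a q ≠ 0 := fun h => hq (Nat.eq_zero_of_gcd_eq_zero_right h)
  have hset : q.divisors.filter (fun d => d ∣ a) = (Nat.gcd a q).divisors := by
    ext d
    simp only [Finset.mem_filter, Nat.mem_divisors, Nat.dvd_gcd_iff]
    constructor
    · rintro ⟨⟨h1, _⟩, h2⟩; exact ⟨⟨h2, h1⟩, hg⟩
    · rintro ⟨⟨h1, h2⟩, _⟩; exact ⟨⟨h2, hq⟩, h1⟩
  rw [hset]
  have h2 : (∑ d ∈ (Nat.gcd a q).divisors, ((moebius d : ℤ) : ℂ))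
      = (((∑ d ∈ (Nat.gcd a q).divisors, (moebius d : ℤ)) : ℤ) : ℂ) := by push_cast; rfl
  rw [h2, moebius_indicator (Nat.gcd a q) hg]
  unfold Nat.Coprime
  split_ifs <;> simp

open ArithmeticFunction in
lemma ramanujan_eval (q : ℕ) (hq : q ≠ 0) (n : ℤ) :
    ∑ a ∈ (Finset.range q).filter (fun a => Nat.Coprime a q), eMod q (n * a)
      = ∑ d ∈ q.divisors,
          ((moebius d : ℤ) : ℂ) * (if ((q/d : ℕ):ℤ) ∣ n then ((q/d : ℕ):ℂ) else 0) := by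
  rw [Finset.sum_filter]
  have step1 : ∀ a ∈ Finset.range q,
      (if Nat.Coprime a q then eMod q (n * a) else 0)
        = ∑ d ∈ q.divisors, (if d ∣ a then ((moebius d : ℤ):ℂ) * eMod q (n * a) else 0) := by
    intro a _
    rw [← Finset.sum_filter]
    have : (∑ d ∈ q.divisors.filter (fun d => d ∣ a), ((moebius d : ℤ):ℂ) * eMod q (n * a))
        = (∑ d ∈ q.divisors.filter (fun d => d ∣ a), ((moebius d : ℤ):ℂ)) * eMod q (n * a) := by
      rw [Finset.sum_mul]
    rw [this, ← coprime_indicator q a hq]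
    split_ifs <;> simp
  rw [Finset.sum_congr rfl step1, Finset.sum_comm]
  apply Finset.sum_congr rfl
  intro d hd
  rw [Nat.mem_divisors] at hd
  obtain ⟨hdq, _⟩ := hd
  have hd0 : d ≠ 0 := fun h => hq (by simpa [h] using Nat.eq_zero_of_zero_dvd (h ▸ hdq))
  have hqd0 : q / d ≠ 0 := Nat.div_ne_zero_iff.mpr ⟨hd0, Nat.le_of_dvd (Nat.pos_of_ne_zero hq) hdq⟩
  rw [← Finset.sum_filter, ← eMod_orth (q/d) hqd0 n, Finset.mul_sum]
  apply Finset.sum_nbij' (i := fun a => a / d) (j := fun b => d * b)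
  · intro a ha
    simp only [Finset.mem_filter, Finset.mem_range] at ha
    rw [Finset.mem_range]
    exact Nat.div_lt_div_of_lt_of_dvd hdq ha.1
  · intro b hb
    rw [Finset.mem_range] at hb
    simp only [Finset.mem_filter, Finset.mem_range]
    exact ⟨(Nat.lt_div_iff_mul_lt' hdq b).mp hb, Dvd.intro b rfl⟩
  · intro a ha
    simp only [Finset.mem_filter] at ha
    exact Nat.mul_div_cancel' ha.2
  · intro b _
    exact Nat.mul_div_cancel_left b (Nat.pos_of_ne_zero hd0)
  · intro a ha
    simp only [Finset.mem_filter] at ha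
    congr 1
    have h1 : eMod (q/d) (n * ((a / d : ℕ):ℤ)) = eMod (d * (q/d)) ((d:ℤ) * (n * ((a/d:ℕ):ℤ))) :=
      (eMod_scale d (q/d) hd0 hqd0 _).symm
    rw [h1, Nat.mul_div_cancel' hdq]
    congr 1
    have : (a : ℤ) = (d : ℤ) * ((a/d : ℕ) : ℤ) := by exact_mod_cast (Nat.mul_div_cancel' ha.2).symm
    rw [this]
    ring

open ArithmeticFunction in
lemma ramanujan_bound (q : ℕ) (hq : q ≠ 0) (n : ℤ) :
    ‖∑ a ∈ (Finset.range q).filter (fun a => Nat.Coprime a q), eMod q (n * a)‖ ≤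
      ∑ d ∈ q.divisors.filter (fun d : ℕ => (d:ℤ) ∣ n), (d:ℝ) := by
  rw [ramanujan_eval q hq n]
  refine le_trans (norm_sum_le _ _) ?_
  have key : ∑ d ∈ q.divisors,
      ‖((moebius d : ℤ):ℂ) * (if ((q/d : ℕ):ℤ) ∣ n then ((q/d : ℕ):ℂ) else 0)‖
      ≤ ∑ d ∈ q.divisors, (if ((q/d : ℕ):ℤ) ∣ n then ((q/d : ℕ):ℝ) else 0) := by
    apply Finset.sum_le_sum
    intro d _
    rw [norm_mul]
    have h1 : ‖((moebius d : ℤ):ℂ)‖ ≤ 1 := by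
      have := abs_moebius_le_one (n := d)
      rw [Complex.norm_intCast]
      exact_mod_cast this
    have h2 : ‖(if ((q/d : ℕ):ℤ) ∣ n then ((q/d : ℕ):ℂ) else 0)‖
        = (if ((q/d : ℕ):ℤ) ∣ n then ((q/d : ℕ):ℝ) else 0) := by
      split_ifs <;> simp
    rw [h2]
    calc ‖((moebius d : ℤ):ℂ)‖ * _ ≤ 1 * (if ((q/d : ℕ):ℤ) ∣ n then ((q/d : ℕ):ℝ) else 0) := by
          apply mul_le_mul_of_nonneg_right h1
          split_ifs <;> simp
      _ = _ := one_mul _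
  refine le_trans key ?_
  rw [Nat.sum_div_divisors q (fun d => if ((d : ℕ):ℤ) ∣ n then ((d : ℕ):ℝ) else 0),
    ← Finset.sum_filter]

lemma card_ap_le (c M : ℕ) (hM : M ≠ 0) (hMc : M ∣ c) (S : Finset ℕ) (hS : S ⊆ Finset.range c)
    (hAP : ∀ x ∈ S, ∀ y ∈ S, (M:ℤ) ∣ (x:ℤ) - (y:ℤ)) : S.card ≤ c / M := by
  have : S.card ≤ (Finset.range (c / M)).card := by
    apply Finset.card_le_card_of_injOn (fun x => x / M)
    · intro x hx
      rw [Finset.coe_range, Set.mem_Iio]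
      exact Nat.div_lt_div_of_lt_of_dvd hMc (Finset.mem_range.mp (hS hx))
    · intro x hx y hy hxy
      have hmod : x % M = y % M := by
        have h1 : x ≡ y [MOD M] := by
          have := hAP y hy x hx
          exact (Nat.modEq_iff_dvd).mpr this
        exact h1
      simp only at hxy
      calc x = M*(x/M) + x%M := (Nat.div_add_mod x M).symm
        _ = M*(y/M) + y%M := by rw [hxy, hmod]
        _ = y := Nat.div_add_mod y M
  simpa using this

lemma count_bound (q r n₁ c d d' : ℕ) (hq : 0 < q) (hr : 0 < r) (hn : 0 < n₁)
    (hc : c * n₁ = q * r) (hd : d ∣ q) (hd' : d' ∣ q) (m m' : ℤ) :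
    d * d' * ((Finset.range c).filter
        (fun x : ℕ => (d:ℤ) ∣ (m + n₁*x) ∧ (d':ℤ) ∣ (m' + n₁*x))).card
      ≤ Nat.gcd d d' * (q * r) := by
  have hd0 : d ≠ 0 := fun h => hq.ne' (Nat.eq_zero_of_zero_dvd (h ▸ hd))
  have hd0' : d' ≠ 0 := fun h => hq.ne' (Nat.eq_zero_of_zero_dvd (h ▸ hd'))
  set L := Nat.lcm d d' with hL
  have hL0 : L ≠ 0 := Nat.lcm_ne_zero hd0 hd0'
  set g := Nat.gcd n₁ L with hg
  have hg0 : g ≠ 0 := Nat.gcd_ne_zero_left hn.ne'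
  set M := L / g with hM
  have hgL : g ∣ L := Nat.gcd_dvd_right n₁ L
  have hgM : g * M = L := Nat.mul_div_cancel' hgL
  have hM0 : M ≠ 0 := by
    intro h; rw [h, mul_zero] at hgM; exact hL0 hgM.symm
  -- lcm n₁ L = n₁ * M
  have hlcm : Nat.lcm n₁ L = n₁ * M := by
    have h1 : g * Nat.lcm n₁ L = n₁ * L := Nat.gcd_mul_lcm n₁ L
    have h2 : n₁ * L = g * (n₁ * M) := by rw [← hgM]; ring
    rw [h2] at h1
    exact Nat.eq_of_mul_eq_mul_left (Nat.pos_of_ne_zero hg0) h1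
  -- M ∣ c
  have hMc : M ∣ c := by
    have hLq : L ∣ q := Nat.lcm_dvd hd hd'
    have h1 : Nat.lcm n₁ L ∣ q * r := Nat.lcm_dvd ⟨c, by rw [← hc]; ring⟩
      (dvd_trans hLq (Dvd.intro r rfl))
    rw [hlcm, ← hc, mul_comm c n₁] at h1
    exact (mul_dvd_mul_iff_left hn.ne').mp h1
  -- AP property
  set S := (Finset.range c).filter
      (fun x : ℕ => (d:ℤ) ∣ (m + n₁*x) ∧ (d':ℤ) ∣ (m' + n₁*x)) with hSdef
  have hAP : ∀ x ∈ S, ∀ y ∈ S, (M:ℤ) ∣ (x:ℤ) - (y:ℤ) := by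
    intro x hx y hy
    simp only [hSdef, Finset.mem_filter] at hx hy
    have hdx : (d:ℤ) ∣ (n₁:ℤ) * ((x:ℤ) - y) := by
      have := dvd_sub hx.2.1 hy.2.1
      simpa [mul_sub] using this
    have hdx' : (d':ℤ) ∣ (n₁:ℤ) * ((x:ℤ) - y) := by
      have := dvd_sub hx.2.2 hy.2.2
      simpa [mul_sub] using this
    have hLdvd : (L:ℤ) ∣ (n₁:ℤ) * ((x:ℤ) - y) := by
      have := Int.lcm_dvd (c := ((n₁:ℤ) * ((x:ℤ) - y)).natAbs) (Int.dvd_natAbs.mpr hdx) (Int.dvd_natAbs.mpr hdx')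
      rw [show Int.lcm (d:ℤ) (d':ℤ) = L by simp [Int.lcm, hL]] at this
      exact Int.natCast_dvd.mpr this
    -- L = g*M, n₁ = g*n₁', gcd(M,n₁')=1
    obtain ⟨n₁', hn₁'⟩ : g ∣ n₁ := Nat.gcd_dvd_left n₁ L
    have hcop : Nat.Coprime M n₁' := by
      have := Nat.coprime_div_gcd_div_gcd (m := n₁) (n := L) (Nat.pos_of_ne_zero hg0)
      have hn₁eq : n₁ / g = n₁' := by rw [hn₁']; exact Nat.mul_div_cancel_left n₁' (Nat.pos_of_ne_zero hg0)
      have hLeq : L / g = M := rfl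
      rw [hn₁eq, hLeq] at this
      exact (Nat.coprime_comm).mp this
    have h1 : ((g:ℤ) * M) ∣ ((g:ℤ) * n₁') * ((x:ℤ) - y) := by
      rw [show ((g:ℤ) * M) = (L:ℤ) by exact_mod_cast hgM,
        show ((g:ℤ) * n₁') = (n₁:ℤ) by exact_mod_cast hn₁'.symm]
      exact hLdvd
    have hgz : (g:ℤ) ≠ 0 := Int.natCast_ne_zero.mpr hg0
    have h2 : (M:ℤ) ∣ (n₁':ℤ) * ((x:ℤ) - y) := by
      rcases h1 with ⟨t, ht⟩
      refine ⟨t, ?_⟩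
      apply mul_left_cancel₀ hgz
      linear_combination ht
    have hcopZ : IsCoprime (M:ℤ) (n₁':ℤ) := Int.isCoprime_iff_gcd_eq_one.mpr (by
      simpa [Int.gcd] using hcop)
    exact (IsCoprime.dvd_of_dvd_mul_left hcopZ h2)
  have hcard : S.card ≤ c / M := card_ap_le c M hM0 hMc S (Finset.filter_subset _ _) hAP
  -- conclude
  have hdd' : d * d' = Nat.gcd d d' * L := (Nat.gcd_mul_lcm d d').symm
  calc d * d' * S.card ≤ d * d' * (c / M) := Nat.mul_le_mul_left _ hcard
    _ = Nat.gcd d d' * (L * (c / M)) := by rw [hdd']; ring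
    _ = Nat.gcd d d' * (g * M * (c / M)) := by rw [hgM]
    _ = Nat.gcd d d' * (g * c) := by rw [mul_assoc g M, Nat.mul_div_cancel' hMc]
    _ ≤ Nat.gcd d d' * (n₁ * c) := by
        apply Nat.mul_le_mul_left
        exact Nat.mul_le_mul_right c (Nat.le_of_dvd hn (Nat.gcd_dvd_left n₁ L))
    _ = Nat.gcd d d' * (q * r) := by rw [mul_comm n₁ c, hc]

lemma sum_beta (B c c' s s' : ℕ) (hB : B ≠ 0) (hc : c ≠ 0) (hc' : c' ≠ 0)
    (hs : s ≠ 0) (hs' : s' ≠ 0) (hsc : s * c = B) (hsc' : s' * c' = B)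
    (u u' : ℤ) (T T' : ℂ) :
    ∑ β ∈ Finset.range B, (T * eMod c ((β:ℤ) * u)) * (T' * eMod c' (-((β:ℤ) * u'))) =
      if (B:ℤ) ∣ ((s:ℤ) * u - (s':ℤ) * u') then (B:ℂ) * (T * T') else 0 := by
  have key : ∀ β : ℕ, (T * eMod c ((β:ℤ) * u)) * (T' * eMod c' (-((β:ℤ) * u'))) =
      (T * T') * eMod B (((s:ℤ) * u - (s':ℤ) * u') * β) := by
    intro β
    have h1 : eMod c ((β:ℤ) * u) = eMod B ((s:ℤ) * ((β:ℤ) * u)) := by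
      rw [← hsc, ← eMod_scale s c hs hc]
    have h2 : eMod c' (-((β:ℤ) * u')) = eMod B ((s':ℤ) * (-((β:ℤ) * u'))) := by
      rw [← hsc', ← eMod_scale s' c' hs' hc']
    rw [h1, h2]
    rw [show (T * eMod B ((s:ℤ) * ((β:ℤ) * u))) * (T' * eMod B ((s':ℤ) * (-((β:ℤ) * u'))))
      = (T * T') * (eMod B ((s:ℤ) * ((β:ℤ) * u)) * eMod B ((s':ℤ) * (-((β:ℤ) * u')))) by ring]
    rw [← eMod_add]
    congr 1
    ring
  rw [Finset.sum_congr rfl (fun β _ => key β), ← Finset.mul_sum,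
    eMod_orth B hB (((s:ℤ) * u - (s':ℤ) * u'))]
  split_ifs <;> ring

lemma corr_identity (B c c' s s' : ℕ) (hB : B ≠ 0) (hc : c ≠ 0) (hc' : c' ≠ 0)
    (hs : s ≠ 0) (hs' : s' ≠ 0) (hsc : s * c = B) (hsc' : s' * c' = B)
    (P P' : Finset (ℕ × ℕ)) (t t' : ℕ × ℕ → ℂ) (X X' : ℕ × ℕ → ℤ) :
    ∑ β ∈ Finset.range B,
        (∑ p ∈ P, t p * eMod c ((β:ℤ) * X p)) *
          (∑ p' ∈ P', t' p' * eMod c' (-((β:ℤ) * X' p'))) =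
      (B:ℂ) * ∑ p ∈ P, ∑ p' ∈ P',
        (if (B:ℤ) ∣ ((s:ℤ) * X p - (s':ℤ) * X' p') then t p * t' p' else 0) := by
  have step1 : ∀ β ∈ Finset.range B,
      (∑ p ∈ P, t p * eMod c ((β:ℤ) * X p)) *
          (∑ p' ∈ P', t' p' * eMod c' (-((β:ℤ) * X' p'))) =
        ∑ p ∈ P, ∑ p' ∈ P',
          (t p * eMod c ((β:ℤ) * X p)) * (t' p' * eMod c' (-((β:ℤ) * X' p'))) := by
    intro β _
    rw [Finset.sum_mul_sum]
  rw [Finset.sum_congr rfl step1, Finset.sum_comm]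
  rw [Finset.mul_sum]
  apply Finset.sum_congr rfl
  intro p _
  rw [Finset.sum_comm, Finset.mul_sum]
  apply Finset.sum_congr rfl
  intro p' _
  rw [sum_beta B c c' s s' hB hc hc' hs hs' hsc hsc' (X p) (X' p') (t p) (t' p')]
  split_ifs <;> ring

def Aset (n : ℕ) : Finset ℕ := (Finset.range n).filter (fun x => Nat.Coprime x n)

def xb (c x : ℕ) : ℤ := ((((x : ZMod c))⁻¹).val : ℤ)

lemma kloos_eq (u v : ℤ) (c : ℕ) :
    kloos u v c = ∑ x ∈ Aset c, eMod c (u * x + v * xb c x) := rfl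

lemma charSum_expand (r n₁ : ℕ) (β m : ℤ) (q : ℕ) :
    charSum r n₁ β m q = ∑ p ∈ (Aset q) ×ˢ (Aset (q*r/n₁)),
      (eMod q (m * p.1) * eMod (q*r/n₁) ((r:ℤ) * p.1 * p.2)) *
        eMod (q*r/n₁) (β * xb (q*r/n₁) p.2) := by
  rw [Finset.sum_product]
  unfold charSum
  apply Finset.sum_congr rfl
  intro a _
  rw [kloos_eq, Finset.mul_sum]
  apply Finset.sum_congr rfl
  intro x _
  rw [show (r:ℤ) * a * x + β * xb (q*r/n₁) x = ((r:ℤ) * a * x) + (β * xb (q*r/n₁) x) by rfl,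
    eMod_add]
  ring

lemma charSum_conj_expand (r n₁ : ℕ) (β m : ℤ) (q : ℕ) :
    (starRingEnd ℂ) (charSum r n₁ β m q) = ∑ p ∈ (Aset q) ×ˢ (Aset (q*r/n₁)),
      (eMod q (-(m * p.1)) * eMod (q*r/n₁) (-((r:ℤ) * p.1 * p.2))) *
        eMod (q*r/n₁) (-(β * xb (q*r/n₁) p.2)) := by
  rw [charSum_expand, map_sum]
  apply Finset.sum_congr rfl
  intro p _
  rw [map_mul, map_mul, eMod_conj, eMod_conj, eMod_conj]

lemma KK0_eq (r n₁ q₁ q₂ q₂' : ℕ) (hr : 0 < r) (hn₁ : 0 < n₁) (hq₁ : 0 < q₁)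
    (hq₂ : 0 < q₂) (hq₂' : 0 < q₂') (hdvd : n₁ ∣ q₁ * r) (m m' : ℤ) :
    KKsum r n₁ q₁ q₂ q₂' m m' 0 =
      ∑ p ∈ (Aset (q₁*q₂)) ×ˢ (Aset (q₁*q₂*r/n₁)),
        ∑ p' ∈ (Aset (q₁*q₂')) ×ˢ (Aset (q₁*q₂'*r/n₁)),
          (if ((q₂*q₂'*q₁*r/n₁ : ℕ):ℤ) ∣
              ((q₂':ℤ) * xb (q₁*q₂*r/n₁) p.2 - (q₂:ℤ) * xb (q₁*q₂'*r/n₁) p'.2)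
           then (eMod (q₁*q₂) (m*p.1) * eMod (q₁*q₂*r/n₁) ((r:ℤ)*p.1*p.2)) *
                (eMod (q₁*q₂') (-(m'*p'.1)) * eMod (q₁*q₂'*r/n₁) (-((r:ℤ)*p'.1*p'.2)))
           else 0) := by
  have hdvd2 : n₁ ∣ q₁*q₂*r := ⟨q₂*(q₁*r/n₁), by
    rw [← Nat.mul_div_assoc q₂ hdvd, ← Nat.mul_div_assoc n₁ (Dvd.dvd.mul_left hdvd q₂)]
    rw [Nat.mul_div_cancel_left _ hn₁]
    ring⟩
  have hdvd2' : n₁ ∣ q₁*q₂'*r := ⟨q₂'*(q₁*r/n₁), by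
    rw [← Nat.mul_div_assoc q₂' hdvd, ← Nat.mul_div_assoc n₁ (Dvd.dvd.mul_left hdvd q₂')]
    rw [Nat.mul_div_cancel_left _ hn₁]
    ring⟩
  have hdvdB : n₁ ∣ q₂*q₂'*q₁*r := ⟨q₂*q₂'*(q₁*r/n₁), by
    rw [← Nat.mul_div_assoc (q₂*q₂') hdvd,
      ← Nat.mul_div_assoc n₁ (Dvd.dvd.mul_left hdvd (q₂*q₂'))]
    rw [Nat.mul_div_cancel_left _ hn₁]
    ring⟩
  set c := q₁*q₂*r/n₁ with hcdef
  set c' := q₁*q₂'*r/n₁ with hcdef'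
  set B := q₂*q₂'*q₁*r/n₁ with hBdef
  have hcpos : 0 < c := Nat.div_pos (Nat.le_of_dvd (by positivity) hdvd2) hn₁
  have hcpos' : 0 < c' := Nat.div_pos (Nat.le_of_dvd (by positivity) hdvd2') hn₁
  have hBpos : 0 < B := Nat.div_pos (Nat.le_of_dvd (by positivity) hdvdB) hn₁
  have hsc : q₂' * c = B := by
    rw [hcdef, hBdef, ← Nat.mul_div_assoc q₂' hdvd2]
    congr 1
    ring
  have hsc' : q₂ * c' = B := by
    rw [hcdef', hBdef, ← Nat.mul_div_assoc q₂ hdvd2']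
    congr 1
    ring
  have hBn : n₁ * B = q₂*q₂'*q₁*r := Nat.mul_div_cancel' hdvdB
  unfold KKsum
  have e0 : ∀ β : ℕ, eMod B ((0:ℤ) * β) = 1 := by
    intro β
    rw [zero_mul, eMod_zero]
  have hstep : ∀ β ∈ Finset.range B,
      charSum r n₁ (β : ℤ) m (q₁ * q₂) *
        (starRingEnd ℂ) (charSum r n₁ (β : ℤ) m' (q₁ * q₂')) * eMod B ((0:ℤ) * β)
      = (∑ p ∈ (Aset (q₁*q₂)) ×ˢ (Aset c),
           (eMod (q₁*q₂) (m * p.1) * eMod c ((r:ℤ) * p.1 * p.2)) *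
             eMod c ((β:ℤ) * xb c p.2)) *
        (∑ p' ∈ (Aset (q₁*q₂')) ×ˢ (Aset c'),
           (eMod (q₁*q₂') (-(m' * p'.1)) * eMod c' (-((r:ℤ) * p'.1 * p'.2))) *
             eMod c' (-((β:ℤ) * xb c' p'.2))) := by
    intro β _
    rw [e0 β, mul_one, charSum_expand, charSum_conj_expand]
  rw [Finset.sum_congr rfl hstep]
  rw [corr_identity B c c' q₂' q₂ hBpos.ne' hcpos.ne' hcpos'.ne' hq₂'.ne' hq₂.ne' hsc hsc'
    ((Aset (q₁*q₂)) ×ˢ (Aset c)) ((Aset (q₁*q₂')) ×ˢ (Aset c'))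
    (fun p => eMod (q₁*q₂) (m * p.1) * eMod c ((r:ℤ) * p.1 * p.2))
    (fun p' => eMod (q₁*q₂') (-(m' * p'.1)) * eMod c' (-((r:ℤ) * p'.1 * p'.2)))
    (fun p => xb c p.2) (fun p' => xb c' p'.2)]
  rw [← mul_assoc]
  have hpre : ((n₁:ℂ) / ((q₂:ℂ) * q₂' * q₁ * r)) * (B:ℂ) = 1 := by
    have h1 : ((q₂:ℂ) * q₂' * q₁ * r) ≠ 0 := by
      rw [show ((q₂:ℂ) * q₂' * q₁ * r) = ((q₂*q₂'*q₁*r : ℕ):ℂ) by push_cast; ring]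
      exact Nat.cast_ne_zero.mpr (by positivity)
    rw [div_mul_eq_mul_div, div_eq_one_iff_eq h1]
    exact_mod_cast hBn
  rw [hpre, one_mul]

lemma xb_coprime (c x : ℕ) (hc : 0 < c) (h : Nat.Coprime x c) :
    Nat.Coprime (((x : ZMod c))⁻¹).val c := by
  haveI : NeZero c := ⟨hc.ne'⟩
  have hu : IsUnit (x : ZMod c) := (ZMod.isUnit_iff_coprime x c).mpr h
  have : (x : ZMod c)⁻¹ = ((hu.unit⁻¹ : (ZMod c)ˣ) : ZMod c) := by
    rw [← ZMod.inv_coe_unit hu.unit, IsUnit.unit_spec]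
  rw [this]
  exact ZMod.val_coe_unit_coprime _

lemma xb_inj (c x x' : ℕ) (hc : 0 < c) (hx : x ∈ Aset c) (hx' : x' ∈ Aset c)
    (h : xb c x = xb c x') : x = x' := by
  haveI : NeZero c := ⟨hc.ne'⟩
  simp only [Aset, Finset.mem_filter, Finset.mem_range] at hx hx'
  have hval : ((x : ZMod c))⁻¹ = ((x' : ZMod c))⁻¹ := by
    apply ZMod.val_injective
    unfold xb at h
    exact_mod_cast h
  have hu : IsUnit (x : ZMod c) := (ZMod.isUnit_iff_coprime x c).mpr hx.2
  have hu' : IsUnit (x' : ZMod c) := (ZMod.isUnit_iff_coprime x' c).mpr hx'.2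
  have : (x : ZMod c) = (x' : ZMod c) := by
    calc (x : ZMod c) = (x : ZMod c) * ((x' : ZMod c)⁻¹ * (x' : ZMod c)) := by
          rw [ZMod.inv_mul_of_unit _ hu', mul_one]
      _ = (x : ZMod c) * (x : ZMod c)⁻¹ * (x' : ZMod c) := by rw [← hval]; ring
      _ = (x' : ZMod c) := by rw [ZMod.mul_inv_of_unit _ hu, one_mul]
  calc x = (x : ZMod c).val := (ZMod.val_cast_of_lt hx.1).symm
    _ = (x' : ZMod c).val := by rw [this]
    _ = x' := ZMod.val_cast_of_lt hx'.1

lemma eMod_change (c q : ℕ) (hc : c ≠ 0) (hq : q ≠ 0) (u v : ℤ)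
    (h : (q:ℤ) * u = (c:ℤ) * v) : eMod c u = eMod q v := by
  unfold eMod
  congr 1
  have hc' : (c:ℂ) ≠ 0 := Nat.cast_ne_zero.mpr hc
  have hq' : (q:ℂ) ≠ 0 := Nat.cast_ne_zero.mpr hq
  field_simp
  have hC : (q:ℂ) * u = (c:ℂ) * v := by exact_mod_cast h
  linear_combination hC

lemma cond_imp_eq (r n₁ q₁ q₂ q₂' : ℕ) (hr : 0 < r) (hn₁ : 0 < n₁) (hq₁ : 0 < q₁)
    (hq₂ : 0 < q₂) (hq₂' : 0 < q₂') (hdvd : n₁ ∣ q₁ * r) (x x' : ℕ)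
    (hx : x ∈ Aset (q₁*q₂*r/n₁)) (hx' : x' ∈ Aset (q₁*q₂'*r/n₁))
    (hcond : ((q₂*q₂'*q₁*r/n₁ : ℕ):ℤ) ∣
      ((q₂':ℤ) * xb (q₁*q₂*r/n₁) x - (q₂:ℤ) * xb (q₁*q₂'*r/n₁) x')) :
    q₂ = q₂' := by
  have hceq : q₁*q₂*r/n₁ = q₂ * (q₁*r/n₁) := by
    rw [show q₁*q₂*r = q₂*(q₁*r) by ring, Nat.mul_div_assoc q₂ hdvd]
  have hceq' : q₁*q₂'*r/n₁ = q₂' * (q₁*r/n₁) := by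
    rw [show q₁*q₂'*r = q₂'*(q₁*r) by ring, Nat.mul_div_assoc q₂' hdvd]
  have hBeq : q₂*q₂'*q₁*r/n₁ = q₂ * q₂' * (q₁*r/n₁) := by
    rw [show q₂*q₂'*q₁*r = q₂*q₂'*(q₁*r) by ring, Nat.mul_div_assoc (q₂*q₂') hdvd]
  set w := q₁*r/n₁ with hw
  have hw0 : 0 < w := Nat.div_pos (Nat.le_of_dvd (by positivity) hdvd) hn₁
  set c := q₁*q₂*r/n₁
  set c' := q₁*q₂'*r/n₁
  have hc0 : 0 < c := by rw [hceq]; positivity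
  have hc0' : 0 < c' := by rw [hceq']; positivity
  simp only [Aset, Finset.mem_filter, Finset.mem_range] at hx hx'
  have hXc : Nat.Coprime (((x : ZMod c))⁻¹).val c := xb_coprime c x hc0 hx.2
  have hXc' : Nat.Coprime (((x' : ZMod c'))⁻¹).val c' := xb_coprime c' x' hc0' hx'.2
  have hXq₂ : Nat.Coprime (((x : ZMod c))⁻¹).val q₂ :=
    Nat.Coprime.coprime_dvd_right (hceq ▸ Dvd.intro w rfl) hXc
  have hXq₂' : Nat.Coprime (((x' : ZMod c'))⁻¹).val q₂' :=
    Nat.Coprime.coprime_dvd_right (hceq' ▸ Dvd.intro w rfl) hXc'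
  set X : ℤ := xb c x with hXdef
  set X' : ℤ := xb c' x' with hXdef'
  have hq₂B : (q₂:ℤ) ∣ ((q₂*q₂'*q₁*r/n₁ : ℕ):ℤ) := by
    rw [hBeq]
    exact_mod_cast Dvd.intro (q₂' * w) (by ring)
  have hq₂'B : (q₂':ℤ) ∣ ((q₂*q₂'*q₁*r/n₁ : ℕ):ℤ) := by
    rw [hBeq]
    exact_mod_cast Dvd.intro (q₂ * w) (by ring)
  have h1 : (q₂:ℤ) ∣ (q₂':ℤ) * X := by
    have hd : (q₂:ℤ) ∣ ((q₂':ℤ) * X - (q₂:ℤ) * X') := dvd_trans hq₂B hcond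
    have : (q₂':ℤ) * X = ((q₂':ℤ) * X - (q₂:ℤ) * X') + (q₂:ℤ) * X' := by ring
    rw [this]
    exact dvd_add hd ⟨X', rfl⟩
  have h2 : (q₂':ℤ) ∣ (q₂:ℤ) * X' := by
    have hd : (q₂':ℤ) ∣ ((q₂':ℤ) * X - (q₂:ℤ) * X') := dvd_trans hq₂'B hcond
    have : (q₂:ℤ) * X' = (q₂':ℤ) * X - ((q₂':ℤ) * X - (q₂:ℤ) * X') := by ring
    rw [this]
    exact dvd_sub ⟨X, rfl⟩ hd
  have hcop1 : IsCoprime (q₂:ℤ) X := by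
    rw [hXdef]
    exact Int.isCoprime_iff_gcd_eq_one.mpr (by simpa [Int.gcd, xb] using hXq₂.symm)
  have hcop2 : IsCoprime (q₂':ℤ) X' := by
    rw [hXdef']
    exact Int.isCoprime_iff_gcd_eq_one.mpr (by simpa [Int.gcd, xb] using hXq₂'.symm)
  have hd1 : q₂ ∣ q₂' := by
    have := hcop1.dvd_of_dvd_mul_right h1
    exact_mod_cast this
  have hd2 : q₂' ∣ q₂ := by
    have := hcop2.dvd_of_dvd_mul_right h2
    exact_mod_cast this
  exact Nat.dvd_antisymm hd1 hd2

lemma cond_iff_diag (c q₂ B : ℕ) (hc : 0 < c) (hq₂ : 0 < q₂) (hB : q₂ * c = B)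
    (x x' : ℕ) (hx : x ∈ Aset c) (hx' : x' ∈ Aset c)
    (hcond : ((B : ℕ):ℤ) ∣ ((q₂:ℤ) * xb c x - (q₂:ℤ) * xb c x')) : x = x' := by
  haveI : NeZero c := ⟨hc.ne'⟩
  have h1 : ((q₂:ℤ) * c) ∣ (q₂:ℤ) * (xb c x - xb c x') := by
    rw [mul_sub]
    rw [show ((q₂:ℤ) * c) = ((B:ℕ):ℤ) by exact_mod_cast hB]
    exact hcond
  have h2 : (c:ℤ) ∣ (xb c x - xb c x') := by
    rcases h1 with ⟨t, ht⟩
    refine ⟨t, ?_⟩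
    apply mul_left_cancel₀ (show (q₂:ℤ) ≠ 0 by exact_mod_cast hq₂.ne')
    linear_combination ht
  have hlt : |xb c x - xb c x'| < (c:ℤ) := by
    have l1 : (0:ℤ) ≤ xb c x := Int.natCast_nonneg _
    have l2 : (0:ℤ) ≤ xb c x' := Int.natCast_nonneg _
    have l3 : xb c x < (c:ℤ) := by unfold xb; exact_mod_cast ZMod.val_lt ((x : ZMod c))⁻¹
    have l4 : xb c x' < (c:ℤ) := by unfold xb; exact_mod_cast ZMod.val_lt ((x' : ZMod c))⁻¹
    rw [abs_lt]
    constructor <;> linarith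
  have : xb c x - xb c x' = 0 := Int.eq_zero_of_abs_lt_dvd h2 hlt
  exact xb_inj c x x' hc hx hx' (by linarith)

lemma KK0_diag (r n₁ q₁ q₂ : ℕ) (hr : 0 < r) (hn₁ : 0 < n₁) (hq₁ : 0 < q₁)
    (hq₂ : 0 < q₂) (hdvd : n₁ ∣ q₁ * r) (m m' : ℤ) :
    KKsum r n₁ q₁ q₂ q₂ m m' 0 =
      ∑ x ∈ Aset (q₁*q₂*r/n₁),
        (∑ a ∈ Aset (q₁*q₂), eMod (q₁*q₂) ((m + (n₁:ℤ)*x)*a)) *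
        (∑ a' ∈ Aset (q₁*q₂), eMod (q₁*q₂) ((-(m' + (n₁:ℤ)*x))*a')) := by
  have hdvd2 : n₁ ∣ q₁*q₂*r := by
    rw [show q₁*q₂*r = q₂*(q₁*r) by ring]
    exact Dvd.dvd.mul_left hdvd q₂
  set q := q₁*q₂ with hqdef
  set c := q₁*q₂*r/n₁ with hcdef
  have hcn : c * n₁ = q * r := by
    rw [hcdef, Nat.div_mul_cancel hdvd2, hqdef]
  have hc0 : 0 < c := Nat.div_pos (Nat.le_of_dvd (by positivity) hdvd2) hn₁
  have hq0 : 0 < q := by positivity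
  have hBeq : q₂ * c = q₂*q₂*q₁*r/n₁ := by
    rw [hcdef, ← Nat.mul_div_assoc q₂ hdvd2]
    congr 1
    ring
  rw [KK0_eq r n₁ q₁ q₂ q₂ hr hn₁ hq₁ hq₂ hq₂ hdvd m m']
  have step1 : ∀ p ∈ (Aset q) ×ˢ (Aset c), ∀ p' ∈ (Aset q) ×ˢ (Aset c),
      (if ((q₂*q₂*q₁*r/n₁ : ℕ):ℤ) ∣
          ((q₂:ℤ) * xb c p.2 - (q₂:ℤ) * xb c p'.2)
       then (eMod q (m*p.1) * eMod c ((r:ℤ)*p.1*p.2)) *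
            (eMod q (-(m'*p'.1)) * eMod c (-((r:ℤ)*p'.1*p'.2)))
       else 0)
      = (if p.2 = p'.2
         then (eMod q (m*p.1) * eMod c ((r:ℤ)*p.1*p.2)) *
              (eMod q (-(m'*p'.1)) * eMod c (-((r:ℤ)*p'.1*p'.2)))
         else 0) := by
    intro p hp p' hp'
    rw [Finset.mem_product] at hp hp'
    apply if_congr _ rfl rfl
    constructor
    · intro hcond
      exact cond_iff_diag c q₂ (q₂*q₂*q₁*r/n₁) hc0 hq₂ hBeq p.2 p'.2 hp.2 hp'.2 hcond
    · intro heq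
      rw [heq, sub_self]
      exact dvd_zero _
  rw [Finset.sum_congr rfl (fun p hp => Finset.sum_congr rfl (fun p' hp' => step1 p hp p' hp'))]
  rw [Finset.sum_product]
  have step2 : ∀ a ∈ Aset q, ∀ x ∈ Aset c,
      (∑ p' ∈ (Aset q) ×ˢ (Aset c),
        (if x = p'.2
         then (eMod q (m*a) * eMod c ((r:ℤ)*a*x)) *
              (eMod q (-(m'*p'.1)) * eMod c (-((r:ℤ)*p'.1*p'.2)))
         else 0))
      = ∑ a' ∈ Aset q,
          (eMod q (m*a) * eMod c ((r:ℤ)*a*x)) *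
            (eMod q (-(m'*a')) * eMod c (-((r:ℤ)*a'*x))) := by
    intro a _ x hx
    rw [Finset.sum_product]
    apply Finset.sum_congr rfl
    intro a' _
    rw [Finset.sum_ite_eq (Aset c) x
      (fun y => (eMod q (m*a) * eMod c ((r:ℤ)*a*x)) *
        (eMod q (-(m'*a')) * eMod c (-((r:ℤ)*a'*y)))), if_pos hx]
  rw [Finset.sum_congr rfl (fun a ha => Finset.sum_congr rfl (fun x hx => step2 a ha x hx))]
  rw [Finset.sum_comm]
  apply Finset.sum_congr rfl
  intro x hx
  rw [Finset.sum_mul_sum]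
  apply Finset.sum_congr rfl
  intro a _
  apply Finset.sum_congr rfl
  intro a' _
  have key1 : eMod c ((r:ℤ)*a*x) = eMod q ((n₁:ℤ)*x*a) := by
    apply eMod_change c q hc0.ne' hq0.ne'
    have : ((c:ℤ) * n₁) = (q:ℤ) * r := by exact_mod_cast hcn
    linear_combination (-(a:ℤ) * x) * this
  have key2 : eMod c (-((r:ℤ)*a'*x)) = eMod q (-((n₁:ℤ)*x*a')) := by
    apply eMod_change c q hc0.ne' hq0.ne'
    have : ((c:ℤ) * n₁) = (q:ℤ) * r := by exact_mod_cast hcn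
    linear_combination ((a':ℤ) * x) * this
  rw [key1, key2]
  have e1 : eMod q (m*a) * eMod q ((n₁:ℤ)*x*a) = eMod q ((m + (n₁:ℤ)*x)*a) := by
    rw [← eMod_add]
    congr 1
    ring
  have e2 : eMod q (-(m'*a')) * eMod q (-((n₁:ℤ)*x*a')) = eMod q ((-(m' + (n₁:ℤ)*x))*a') := by
    rw [← eMod_add]
    congr 1
    ring
  rw [show (eMod q (m*a) * eMod q ((n₁:ℤ)*x*a)) * (eMod q (-(m'*a')) * eMod q (-((n₁:ℤ)*x*a')))
      = (eMod q (m*a) * eMod q ((n₁:ℤ)*x*a)) * (eMod q (-(m'*a')) * eMod q (-((n₁:ℤ)*x*a'))) from rfl,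
    e1, e2]

lemma ramanujan_bound' (q : ℕ) (hq : q ≠ 0) (n : ℤ) :
    ‖∑ a ∈ Aset q, eMod q (n * a)‖ ≤
      ∑ d ∈ q.divisors.filter (fun d : ℕ => (d:ℤ) ∣ n), (d:ℝ) :=
  ramanujan_bound q hq n

lemma KK0_bound (r n₁ q₁ q₂ : ℕ) (hr : 0 < r) (hn₁ : 0 < n₁) (hq₁ : 0 < q₁)
    (hq₂ : 0 < q₂) (hdvd : n₁ ∣ q₁ * r) (m m' : ℤ) :
    ‖KKsum r n₁ q₁ q₂ q₂ m m' 0‖ ≤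
      (q₁ : ℝ) * q₂ * r *
        ∑ d ∈ (q₁ * q₂).divisors,
          ∑ d' ∈ ((q₁ * q₂).divisors).filter
              (fun d' => ((Nat.gcd d d' : ℕ) : ℤ) ∣ (m - m')),
            ((Nat.gcd d d' : ℕ) : ℝ) := by
  have hdvd2 : n₁ ∣ q₁*q₂*r := by
    rw [show q₁*q₂*r = q₂*(q₁*r) by ring]
    exact Dvd.dvd.mul_left hdvd q₂
  set q := q₁*q₂ with hqdef
  set c := q₁*q₂*r/n₁ with hcdef
  have hcn : c * n₁ = q * r := by rw [hcdef, Nat.div_mul_cancel hdvd2, hqdef]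
  have hc0 : 0 < c := Nat.div_pos (Nat.le_of_dvd (by positivity) hdvd2) hn₁
  have hq0 : 0 < q := by positivity
  rw [KK0_diag r n₁ q₁ q₂ hr hn₁ hq₁ hq₂ hdvd m m']
  set D := q.divisors with hDdef
  -- first bound
  have h1 : ‖∑ x ∈ Aset c,
      (∑ a ∈ Aset q, eMod q ((m + (n₁:ℤ)*x)*a)) *
      (∑ a' ∈ Aset q, eMod q ((-(m' + (n₁:ℤ)*x))*a'))‖ ≤
      ∑ x ∈ Aset c,
        (∑ d ∈ D.filter (fun d : ℕ => (d:ℤ) ∣ (m + (n₁:ℤ)*x)), (d:ℝ)) *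
        (∑ d' ∈ D.filter (fun d' : ℕ => (d':ℤ) ∣ (m' + (n₁:ℤ)*x)), (d':ℝ)) := by
    refine le_trans (norm_sum_le _ _) (Finset.sum_le_sum ?_)
    intro x _
    rw [norm_mul]
    have hP := ramanujan_bound' q hq0.ne' (m + (n₁:ℤ)*x)
    have hQ := ramanujan_bound' q hq0.ne' (-(m' + (n₁:ℤ)*x))
    have hQ' : ∑ d ∈ D.filter (fun d : ℕ => (d:ℤ) ∣ (-(m' + (n₁:ℤ)*x))), (d:ℝ)
        = ∑ d' ∈ D.filter (fun d' : ℕ => (d':ℤ) ∣ (m' + (n₁:ℤ)*x)), (d':ℝ) := by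
      apply Finset.sum_congr _ (fun _ _ => rfl)
      apply Finset.filter_congr
      intro d _
      exact dvd_neg
    rw [hQ'] at hQ
    apply mul_le_mul hP hQ (norm_nonneg _)
    exact Finset.sum_nonneg (fun d _ => by positivity)
  refine le_trans h1 ?_
  -- expand product of sums
  have h2 : ∀ x : ℕ,
      (∑ d ∈ D.filter (fun d : ℕ => (d:ℤ) ∣ (m + (n₁:ℤ)*x)), (d:ℝ)) *
      (∑ d' ∈ D.filter (fun d' : ℕ => (d':ℤ) ∣ (m' + (n₁:ℤ)*x)), (d':ℝ))
      = ∑ d ∈ D, ∑ d' ∈ D,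
          (if (d:ℤ) ∣ (m + (n₁:ℤ)*x) ∧ (d':ℤ) ∣ (m' + (n₁:ℤ)*x) then (d:ℝ)*d' else 0) := by
    intro x
    rw [Finset.sum_filter, Finset.sum_filter, Finset.sum_mul_sum]
    apply Finset.sum_congr rfl
    intro d _
    apply Finset.sum_congr rfl
    intro d' _
    split_ifs with h1' h2' h3' <;> simp_all
  rw [Finset.sum_congr rfl (fun x _ => h2 x), Finset.sum_comm]
  have h3 : ∀ d ∈ D, (∑ x ∈ Aset c, ∑ d' ∈ D,
      (if (d:ℤ) ∣ (m + (n₁:ℤ)*x) ∧ (d':ℤ) ∣ (m' + (n₁:ℤ)*x) then (d:ℝ)*d' else 0))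
      = ∑ d' ∈ D, ((d:ℝ)*d') *
          ((Aset c).filter
            (fun x : ℕ => (d:ℤ) ∣ (m + (n₁:ℤ)*x) ∧ (d':ℤ) ∣ (m' + (n₁:ℤ)*x))).card := by
    intro d _
    rw [Finset.sum_comm]
    apply Finset.sum_congr rfl
    intro d' _
    rw [← Finset.sum_filter, Finset.sum_const, nsmul_eq_mul, mul_comm]
  rw [Finset.sum_congr rfl h3]
  -- termwise comparison
  have h4 : ∀ d ∈ D, ∀ d' ∈ D,
      ((d:ℝ)*d') * ((Aset c).filter
          (fun x : ℕ => (d:ℤ) ∣ (m + (n₁:ℤ)*x) ∧ (d':ℤ) ∣ (m' + (n₁:ℤ)*x))).card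
      ≤ (if ((Nat.gcd d d' : ℕ):ℤ) ∣ (m - m')
         then ((Nat.gcd d d' : ℕ):ℝ) * ((q:ℝ)*r) else 0) := by
    intro d hd d' hd'
    rw [hDdef, Nat.mem_divisors] at hd hd'
    split_ifs with hgcd
    · -- use count_bound
      have hsub : ((Aset c).filter
            (fun x : ℕ => (d:ℤ) ∣ (m + (n₁:ℤ)*x) ∧ (d':ℤ) ∣ (m' + (n₁:ℤ)*x))).card
          ≤ (((Finset.range c)).filter
            (fun x : ℕ => (d:ℤ) ∣ (m + (n₁:ℤ)*x) ∧ (d':ℤ) ∣ (m' + (n₁:ℤ)*x))).card := by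
        apply Finset.card_le_card
        apply Finset.filter_subset_filter
        exact Finset.filter_subset _ _
      have hcb := count_bound q r n₁ c d d' hq0 hr hn₁ hcn hd.1 hd'.1 m m'
      have : d * d' * ((Aset c).filter
            (fun x : ℕ => (d:ℤ) ∣ (m + (n₁:ℤ)*x) ∧ (d':ℤ) ∣ (m' + (n₁:ℤ)*x))).card
          ≤ Nat.gcd d d' * (q * r) :=
        le_trans (Nat.mul_le_mul_left _ hsub) hcb
      calc ((d:ℝ)*d') * _ = ((d * d' * ((Aset c).filter
            (fun x : ℕ => (d:ℤ) ∣ (m + (n₁:ℤ)*x) ∧ (d':ℤ) ∣ (m' + (n₁:ℤ)*x))).card : ℕ) : ℝ) := by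
            push_cast; ring
        _ ≤ ((Nat.gcd d d' * (q * r) : ℕ) : ℝ) := by exact_mod_cast this
        _ = ((Nat.gcd d d' : ℕ):ℝ) * ((q:ℝ)*r) := by push_cast; ring
    · -- the filter is empty
      have hempty : ((Aset c).filter
          (fun x : ℕ => (d:ℤ) ∣ (m + (n₁:ℤ)*x) ∧ (d':ℤ) ∣ (m' + (n₁:ℤ)*x))) = ∅ := by
        rw [Finset.filter_eq_empty_iff]
        intro x _
        intro hcontra
        apply hgcd
        have hg1 : ((Nat.gcd d d' : ℕ):ℤ) ∣ (m + (n₁:ℤ)*x) :=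
          dvd_trans (Int.natCast_dvd_natCast.mpr (Nat.gcd_dvd_left d d')) hcontra.1
        have hg2 : ((Nat.gcd d d' : ℕ):ℤ) ∣ (m' + (n₁:ℤ)*x) :=
          dvd_trans (Int.natCast_dvd_natCast.mpr (Nat.gcd_dvd_right d d')) hcontra.2
        have := dvd_sub hg1 hg2
        simpa using this
      rw [hempty]
      simp
  refine le_trans (Finset.sum_le_sum (fun d hd => Finset.sum_le_sum (h4 d hd))) ?_
  apply le_of_eq
  rw [Finset.mul_sum]
  apply Finset.sum_congr rfl
  intro d _
  rw [Finset.sum_filter, Finset.mul_sum]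
  apply Finset.sum_congr rfl
  intro d' _
  split_ifs
  · rw [hqdef]; push_cast; ring
  · ring


/-- The zero-frequency assertion of Lemma 5.1 of the paper: `𝔎(0) ≠ 0` forces
`q₂ = q₂'`, and in that case `𝔎(0)` satisfies the stated divisor-sum bound. -/
theorem KKsum_zero_frequency
    (r n₁ q₁ q₂ q₂' : ℕ) (hr : 0 < r) (hn₁ : 0 < n₁) (hq₁ : 0 < q₁)
    (hq₂ : 0 < q₂) (hq₂' : 0 < q₂')
    (hdvd : n₁ ∣ q₁ * r)
    (hrad : ∀ p : ℕ, p.Prime → p ∣ q₁ → p ∣ n₁ * r)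
    (hcop : Nat.Coprime q₂ (n₁ * r)) (hcop' : Nat.Coprime q₂' (n₁ * r))
    (m m' : ℤ) :
    (KKsum r n₁ q₁ q₂ q₂' m m' 0 ≠ 0 → q₂ = q₂') ∧
      (q₂ = q₂' →
        ‖KKsum r n₁ q₁ q₂ q₂' m m' 0‖ ≤
          (q₁ : ℝ) * q₂ * r *
            ∑ d ∈ (q₁ * q₂).divisors,
              ∑ d' ∈ ((q₁ * q₂).divisors).filter
                  (fun d' => ((Nat.gcd d d' : ℕ) : ℤ) ∣ (m - m')),
                ((Nat.gcd d d' : ℕ) : ℝ)) := by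
  constructor
  · intro hne
    by_contra hne2
    apply hne
    rw [KK0_eq r n₁ q₁ q₂ q₂' hr hn₁ hq₁ hq₂ hq₂' hdvd m m']
    apply Finset.sum_eq_zero
    intro p hp
    apply Finset.sum_eq_zero
    intro p' hp'
    rw [Finset.mem_product] at hp hp'
    rw [if_neg]
    intro hcond
    exact hne2 (cond_imp_eq r n₁ q₁ q₂ q₂' hr hn₁ hq₁ hq₂ hq₂' hdvd p.2 p'.2 hp.2 hp'.2 hcond)
  · intro heq
    subst heq
    exact KK0_bound r n₁ q₁ q₂ hr hn₁ hq₁ hq₂ hdvd m m'
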